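/- Let W be a Coxeter group, w ∈ W, and let W' be a rank two parabolic subgroup all of whose reflections are inversions of w. If t ∈ W' is a cover reflection of w, then t is a canonical generator of W'. -/

import Mathlib

/-- A geometric (reflection) representation of the Coxeter system `cs`, arising from a
symmetrizable generalized Cartan matrix `a` with symmetrizing function `δ`.  The field `α`
records the simple roots (a basis of `V`), `ρ` is the reflection representation, and `β`
assigns to each reflection `t = w sᵢ w⁻¹` its positive root (the member of `±(w · αᵢ)` lying
in the nonnegative span of the simple roots). -/
structure CoxeterGeomRep {B W : Type*} [Group W] (M : CoxeterMatrix B)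
    (cs : CoxeterSystem M W) (V : Type*) [AddCommGroup V] [Module ℝ V] where
  /-- the generalized Cartan matrix -/
  a : B → B → ℝ
  /-- the symmetrizing function -/
  δ : B → ℝ
  δ_pos : ∀ i, 0 < δ i
  symmetrize : ∀ i j, δ i * a i j = δ j * a j i
  δ_conj : ∀ i j, IsConj (cs.simple i) (cs.simple j) → δ i = δ j
  a_diag : ∀ i, a i i = 2
  a_offdiag : ∀ i j, i ≠ j → a i j ≤ 0
  a_fin : ∀ i j, i ≠ j → M i j ≠ 0 →
    a i j * a j i = 4 * Real.cos (Real.pi / (M i j : ℝ)) ^ 2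
  a_inf : ∀ i j, M i j = 0 → 4 ≤ a i j * a j i
  a_zero : ∀ i j, a i j = 0 ↔ a j i = 0
  /-- the simple roots, a basis of `V` -/
  α : Module.Basis B ℝ V
  /-- the reflection representation of `W` on `V` -/
  ρ : W →* (V ≃ₗ[ℝ] V)
  act : ∀ i j, ρ (cs.simple i) (α j) = α j - a i j • α i
  /-- the positive root associated to each reflection -/
  β : W → V
  β_root : ∀ (w : W) (i : B),
    β (w * cs.simple i * w⁻¹) = ρ w (α i) ∨ β (w * cs.simple i * w⁻¹) = -(ρ w (α i))
  β_pos : ∀ t, cs.IsReflection t →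
    ∃ c : B →₀ ℝ, (∀ i, 0 ≤ c i) ∧ β t = c.sum fun i r => r • α i

/-- `v` lies in the nonnegative linear span (the cone generated by) the set `X`. -/
def InCone {V : Type*} [AddCommGroup V] [Module ℝ V] (X : Set V) (v : V) : Prop :=
  ∃ (n : ℕ) (x : Fin n → V) (c : Fin n → ℝ),
    (∀ k, x k ∈ X) ∧ (∀ k, 0 ≤ c k) ∧ v = ∑ k, c k • x k

/-- `R` is the set of canonical generators of the reflection subgroup `W'`:  every positive
root of a reflection of `W'` lies in the nonnegative span of `{β_r : r ∈ R}`, and no `β_r`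
lies in the nonnegative span of the positive roots of the other reflections of `W'`. -/
def IsCanonicalGenerators {B W V : Type*} [Group W] [AddCommGroup V] [Module ℝ V]
    {M : CoxeterMatrix B} (cs : CoxeterSystem M W) (g : CoxeterGeomRep M cs V)
    (W' : Subgroup W) (R : Set W) : Prop :=
  R ⊆ {t | t ∈ W' ∧ cs.IsReflection t} ∧
  (∀ t ∈ W', cs.IsReflection t → InCone (g.β '' R) (g.β t)) ∧
  ∀ r ∈ R, ¬ InCone (g.β '' ({t | t ∈ W' ∧ cs.IsReflection t} \ {r})) (g.β r)

/-- `t` is a cover reflection of `w`: an inversion of `w` with `t * w = w * s` for some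
simple generator `s`. -/
def IsCoverReflection {B W : Type*} [Group W] {M : CoxeterMatrix B}
    (cs : CoxeterSystem M W) (w t : W) : Prop :=
  cs.IsLeftInversion w t ∧ ∃ s : B, t * w = w * cs.simple s

/-!
Work in the root system of the geometric representation. The roots of the reflections of
`W' = u ⟨s_i, s_j⟩ u⁻¹` lie in the plane spanned by `u α_i` and `u α_j`, are pairwise
non-proportional, and are finitely many since they are roots of inversions of `w`; so every
one of them is a nonnegative combination of the two extreme ones, and these two are the
canonical generators. If `t = w s w⁻¹` is a cover reflection, then `w⁻¹` sends `β_t` to `-α_s`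
and the roots of all other inversions of `w` to negative roots, and a simple root is not a
nonnegative combination of other positive roots; so `β_t` is extreme.
-/

section InCone

variable {V V' : Type*} [AddCommGroup V] [Module ℝ V] [AddCommGroup V'] [Module ℝ V']
  {X Y : Set V} {v : V}

lemma InCone.mono (h : InCone X v) (hXY : X ⊆ Y) : InCone Y v := by
  obtain ⟨n, x, c, hx, hc, rfl⟩ := h
  exact ⟨n, x, c, fun k => hXY (hx k), hc, rfl⟩

lemma InCone.map (h : InCone X v) (f : V →ₗ[ℝ] V') : InCone (f '' X) (f v) := by
  obtain ⟨n, x, c, hx, hc, rfl⟩ := h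
  exact ⟨n, f ∘ x, c, fun k => Set.mem_image_of_mem f (hx k), hc, by simp⟩

lemma inCone_of_eq_smul_add_smul {x y : V} (hx : x ∈ X) (hy : y ∈ X) {a b : ℝ} (ha : 0 ≤ a)
    (hb : 0 ≤ b) (hv : v = a • x + b • y) : InCone X v :=
  ⟨2, ![x, y], ![a, b], fun k => by fin_cases k <;> assumption,
    fun k => by fin_cases k <;> assumption, by simp [hv, Fin.sum_univ_two]⟩

lemma not_inCone_of_forall_pos (f : V →ₗ[ℝ] ℝ) (hv : v ≠ 0) (hfv : f v = 0)
    (hX : ∀ x ∈ X, 0 < f x) : ¬ InCone X v := by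
  rintro ⟨n, x, c, hx, hc, rfl⟩
  have hzero : ∀ k, c k = 0 := by
    have hsum : ∑ k, c k * f (x k) = 0 := by simpa using hfv
    intro k
    have := (Finset.sum_eq_zero_iff_of_nonneg fun k _ => mul_nonneg (hc k) (hX _ (hx k)).le).1
      hsum k (Finset.mem_univ k)
    exact (mul_eq_zero.1 this).resolve_right (hX _ (hx k)).ne'
  exact hv (by simp [hzero])

end InCone

section PlanarCone

variable {V : Type*} [AddCommGroup V] [Module ℝ V] {P : Submodule ℝ V} {F Q : V →ₗ[ℝ] ℝ}

lemma eq_smul_of_slope_eq (hFQ : ∀ z ∈ P, F z = 0 → Q z = 0 → z = 0) {x y : V} (hx : x ∈ P)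
    (hy : y ∈ P) (hFx : 0 < F x) (hFy : 0 < F y) (h : Q x / F x = Q y / F y) :
    y = (F y / F x) • x := by
  rw [div_eq_div_iff hFx.ne' hFy.ne'] at h
  refine sub_eq_zero.1 (hFQ _ (P.sub_mem hy (P.smul_mem _ hx)) ?_ ?_)
  · simp only [map_sub, map_smul, smul_eq_mul]
    field_simp
    ring
  · simp only [map_sub, map_smul, smul_eq_mul]
    field_simp
    linarith

lemma exists_eq_smul_add_smul_of_slope_mem_Icc (hFQ : ∀ z ∈ P, F z = 0 → Q z = 0 → z = 0)
    {x y v : V} (hx : x ∈ P) (hy : y ∈ P) (hv : v ∈ P) (hFx : 0 < F x) (hFy : 0 < F y)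
    (hFv : 0 < F v) (hxv : Q x / F x ≤ Q v / F v) (hvy : Q v / F v ≤ Q y / F y)
    (hxy : Q x / F x < Q y / F y) :
    ∃ a b : ℝ, 0 ≤ a ∧ 0 ≤ b ∧ v = a • x + b • y := by
  set σx := Q x / F x
  set σy := Q y / F y
  set σv := Q v / F v
  have hd : 0 < σy - σx := by linarith
  refine ⟨F v * (σy - σv) / (F x * (σy - σx)), F v * (σv - σx) / (F y * (σy - σx)),
    by positivity, by positivity, ?_⟩
  have hQx : Q x = σx * F x := (div_mul_cancel₀ _ hFx.ne').symm
  have hQy : Q y = σy * F y := (div_mul_cancel₀ _ hFy.ne').symm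
  have hQv : Q v = σv * F v := (div_mul_cancel₀ _ hFv.ne').symm
  refine sub_eq_zero.1 (hFQ _ (P.sub_mem hv (P.add_mem (P.smul_mem _ hx) (P.smul_mem _ hy)))
    ?_ ?_)
  · simp only [map_sub, map_add, map_smul, smul_eq_mul]
    field_simp
    ring
  · simp only [map_sub, map_add, map_smul, smul_eq_mul, hQx, hQy, hQv]
    field_simp
    ring

lemma not_inCone_of_slope_lt {X : Set V} {v : V} (hFv : 0 < F v) (hFX : ∀ x ∈ X, 0 < F x)
    (hX : ∀ x ∈ X, Q v / F v < Q x / F x) : ¬ InCone X v := by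
  refine not_inCone_of_forall_pos (F v • Q - Q v • F) (fun h => by simp [h] at hFv)
    (by simp [mul_comm]) fun x hx => ?_
  have := (div_lt_div_iff₀ hFv (hFX x hx)).1 (hX x hx)
  simp only [LinearMap.sub_apply, LinearMap.smul_apply, smul_eq_mul]
  linarith

/-- `hFQ` makes `(F, Q)` coordinates on the plane `P`; the extreme members of the family are
those of minimal and maximal slope `Q / F`. -/
theorem inCone_image_extreme {ι : Type*} (hFQ : ∀ z ∈ P, F z = 0 → Q z = 0 → z = 0)
    {f : ι → V} {S : Set ι} (hS : S.Finite) (hSP : ∀ i ∈ S, f i ∈ P) (hSF : ∀ i ∈ S, 0 < F (f i))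
    (hSinj : ∀ i ∈ S, ∀ j ∈ S, ∀ c : ℝ, f j = c • f i → j = i) {i : ι} (hi : i ∈ S) :
    InCone (f '' {r | r ∈ S ∧ ¬ InCone (f '' (S \ {r})) (f r)}) (f i) := by
  set σ : ι → ℝ := fun r => Q (f r) / F (f r)
  have hσ_inj : ∀ a ∈ S, ∀ b ∈ S, σ a = σ b → a = b := fun a ha b hb h =>
    hSinj b hb a ha _ (eq_smul_of_slope_eq hFQ (hSP b hb) (hSP a ha) (hSF b hb) (hSF a ha) h.symm)
  have hmem : i ∈ hS.toFinset := hS.mem_toFinset.2 hi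
  obtain ⟨r₁, hr₁, hmin⟩ := hS.toFinset.exists_min_image σ ⟨i, hmem⟩
  obtain ⟨r₂, hr₂, hmax⟩ := hS.toFinset.exists_max_image σ ⟨i, hmem⟩
  rw [hS.mem_toFinset] at hr₁ hr₂
  simp only [hS.mem_toFinset] at hmin hmax
  have hF_diff : ∀ r, ∀ x ∈ f '' (S \ {r}), 0 < F x := by
    rintro r _ ⟨a, ⟨ha, -⟩, rfl⟩
    exact hSF a ha
  have hr₁E : ¬ InCone (f '' (S \ {r₁})) (f r₁) := by
    refine not_inCone_of_slope_lt (Q := Q) (hSF r₁ hr₁) (hF_diff r₁) ?_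
    rintro _ ⟨a, ⟨ha, har⟩, rfl⟩
    exact (hmin a ha).lt_of_ne fun h => har (hσ_inj a ha r₁ hr₁ h.symm)
  have hr₂E : ¬ InCone (f '' (S \ {r₂})) (f r₂) := by
    refine not_inCone_of_slope_lt (Q := -Q) (hSF r₂ hr₂) (hF_diff r₂) ?_
    rintro _ ⟨a, ⟨ha, har⟩, rfl⟩
    have := (hmax a ha).lt_of_ne fun h => har (hσ_inj a ha r₂ hr₂ h)
    simp only [LinearMap.neg_apply, neg_div]
    exact neg_lt_neg this
  rcases (hmin r₂ hr₂).eq_or_lt with heq | hlt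
  · obtain rfl : i = r₁ := hσ_inj i hi r₁ hr₁ (le_antisymm (heq ▸ hmax i hi) (hmin i hi))
    exact inCone_of_eq_smul_add_smul ⟨i, ⟨hi, hr₁E⟩, rfl⟩ ⟨i, ⟨hi, hr₁E⟩, rfl⟩ zero_le_one le_rfl
      (by simp)
  · obtain ⟨a, b, ha, hb, hv⟩ := exists_eq_smul_add_smul_of_slope_mem_Icc hFQ (hSP r₁ hr₁)
      (hSP r₂ hr₂) (hSP i hi) (hSF r₁ hr₁) (hSF r₂ hr₂) (hSF i hi) (hmin i hi) (hmax i hi) hlt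
    exact inCone_of_eq_smul_add_smul ⟨r₁, ⟨hr₁, hr₁E⟩, rfl⟩ ⟨r₂, ⟨hr₂, hr₂E⟩, rfl⟩ ha hb hv

end PlanarCone

section DihedralCoeff

open Real

variable (c₁ c₂ : ℝ)

/-- With `c₁ = -a i j` and `c₂ = -a j i`, the coordinates of `⋯ s_i s_j α_i` (an alternating
word of length `r`) in the basis `α_i, α_j`. -/
noncomputable def dihedralCoeff : ℕ → ℝ × ℝ
  | 0 => (1, 0)
  | m + 1 =>
    let p := dihedralCoeff m
    if Even m then (p.1, c₂ * p.1 - p.2) else (c₁ * p.2 - p.1, p.2)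

lemma dihedralCoeff_succ_of_even {m : ℕ} (hm : Even m) :
    dihedralCoeff c₁ c₂ (m + 1) =
      ((dihedralCoeff c₁ c₂ m).1, c₂ * (dihedralCoeff c₁ c₂ m).1 - (dihedralCoeff c₁ c₂ m).2) := by
  simp [dihedralCoeff, hm]

lemma dihedralCoeff_succ_of_not_even {m : ℕ} (hm : ¬ Even m) :
    dihedralCoeff c₁ c₂ (m + 1) =
      (c₁ * (dihedralCoeff c₁ c₂ m).2 - (dihedralCoeff c₁ c₂ m).1, (dihedralCoeff c₁ c₂ m).2) := by
  simp [dihedralCoeff, hm]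

variable {c₁ c₂}

lemma dihedralCoeff_nonneg_of_four_le (h₁ : 0 ≤ c₁) (h₂ : 0 ≤ c₂) (h : 4 ≤ c₁ * c₂) (r : ℕ) :
    0 ≤ (dihedralCoeff c₁ c₂ r).1 ∧ 0 ≤ (dihedralCoeff c₁ c₂ r).2 := by
  -- `4 ≤ c₁ * c₂` keeps the coordinate updated next from decreasing
  suffices key : ∀ r, 0 ≤ (dihedralCoeff c₁ c₂ r).1 ∧ 0 ≤ (dihedralCoeff c₁ c₂ r).2 ∧
      if Even r then 2 * (dihedralCoeff c₁ c₂ r).2 ≤ c₂ * (dihedralCoeff c₁ c₂ r).1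
      else 2 * (dihedralCoeff c₁ c₂ r).1 ≤ c₁ * (dihedralCoeff c₁ c₂ r).2 from
    ⟨(key r).1, (key r).2.1⟩
  intro r
  induction r with
  | zero => simp [dihedralCoeff, h₂]
  | succ m ih =>
    obtain ⟨hp, hq, hinv⟩ := ih
    by_cases hm : Even m
    · rw [if_pos hm] at hinv
      rw [dihedralCoeff_succ_of_even c₁ c₂ hm, if_neg (by simpa [Nat.even_add_one] using hm)]
      refine ⟨hp, by nlinarith, ?_⟩
      nlinarith [mul_nonneg h₁ hq, mul_nonneg (mul_nonneg h₁ h₂) hp]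
    · rw [if_neg hm] at hinv
      rw [dihedralCoeff_succ_of_not_even c₁ c₂ hm, if_pos (by simpa [Nat.even_add_one] using hm)]
      refine ⟨by nlinarith, hq, ?_⟩
      nlinarith [mul_nonneg h₂ hp, mul_nonneg (mul_nonneg h₁ h₂) hq]

lemma dihedralCoeff_eq_sin {θ : ℝ} (hs : sin θ ≠ 0) (hc : cos θ ≠ 0)
    (h : c₁ * c₂ = 4 * cos θ ^ 2) (n : ℕ) :
    dihedralCoeff c₁ c₂ (2 * n) =
        (sin ((2 * n + 1) * θ) / sin θ, c₂ * (sin (2 * n * θ) / sin (2 * θ))) ∧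
      dihedralCoeff c₁ c₂ (2 * n + 1) =
        (sin ((2 * n + 1) * θ) / sin θ, c₂ * (sin ((2 * n + 2) * θ) / sin (2 * θ))) := by
  have hsin₂ : sin (2 * θ) = 2 * sin θ * cos θ := sin_two_mul θ
  have step : ∀ n : ℕ, dihedralCoeff c₁ c₂ (2 * n) =
        (sin ((2 * n + 1) * θ) / sin θ, c₂ * (sin (2 * n * θ) / sin (2 * θ))) →
      dihedralCoeff c₁ c₂ (2 * n + 1) =
        (sin ((2 * n + 1) * θ) / sin θ, c₂ * (sin ((2 * n + 2) * θ) / sin (2 * θ))) := by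
    intro n e
    rw [dihedralCoeff_succ_of_even c₁ c₂ (even_two_mul n), e]
    have e₁ : (2 * n + 2) * θ = (2 * n + 1) * θ + θ := by ring
    have e₂ : 2 * n * θ = (2 * n + 1) * θ - θ := by ring
    rw [e₁, e₂, sin_add, sin_sub, hsin₂]
    simp only [Prod.mk.injEq, true_and]
    field_simp
    ring
  induction n with
  | zero =>
    have e : dihedralCoeff c₁ c₂ (2 * 0) = (sin ((2 * (0 : ℕ) + 1) * θ) / sin θ,
        c₂ * (sin (2 * (0 : ℕ) * θ) / sin (2 * θ))) := by
      simp [dihedralCoeff, hs]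
    exact ⟨e, step _ e⟩
  | succ n ih =>
    have e : dihedralCoeff c₁ c₂ (2 * (n + 1)) = (sin ((2 * ((n + 1 : ℕ) : ℝ) + 1) * θ) / sin θ,
        c₂ * (sin (2 * ((n + 1 : ℕ) : ℝ) * θ) / sin (2 * θ))) := by
      rw [show 2 * (n + 1) = 2 * n + 1 + 1 by ring,
        dihedralCoeff_succ_of_not_even c₁ c₂ (by simp), ih.2]
      have e₁ : (2 * ((n + 1 : ℕ) : ℝ) + 1) * θ = (2 * n + 2) * θ + θ := by push_cast; ring
      have e₂ : (2 * n + 1) * θ = (2 * n + 2) * θ - θ := by ring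
      have e₃ : 2 * ((n + 1 : ℕ) : ℝ) * θ = (2 * n + 2) * θ := by push_cast; ring
      rw [e₁, e₂, e₃, sin_add, sin_sub, hsin₂]
      generalize (2 * (n : ℝ) + 2) * θ = x
      simp only [Prod.mk.injEq, and_true]
      field_simp
      linear_combination sin x * h
    exact ⟨e, step _ e⟩

lemma dihedralCoeff_nonneg_of_cos (h₂ : 0 ≤ c₂) {m : ℕ}
    (h : c₁ * c₂ = 4 * cos (π / m) ^ 2) {r : ℕ} (hr : r + 1 ≤ m) :
    0 ≤ (dihedralCoeff c₁ c₂ r).1 ∧ 0 ≤ (dihedralCoeff c₁ c₂ r).2 := by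
  rcases le_or_gt r 1 with hr1 | hr1
  · interval_cases r <;> simp [dihedralCoeff, h₂]
  have hm : (3 : ℝ) ≤ m := by exact_mod_cast (show 3 ≤ m by omega)
  set θ := π / m with hθ
  have hθ₀ : 0 < θ := by positivity
  have hθ₁ : θ ≤ π / 3 := div_le_div_of_nonneg_left pi_pos.le (by norm_num) hm
  have hcos : 0 < cos θ := cos_pos_of_mem_Ioo ⟨by linarith [pi_pos], by linarith [pi_pos]⟩
  have hsin : 0 < sin θ := sin_pos_of_pos_of_lt_pi hθ₀ (by linarith [pi_pos])
  have hsin₂ : 0 < sin (2 * θ) := by rw [sin_two_mul]; positivity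
  have hsin_nonneg : ∀ k : ℕ, k ≤ m → 0 ≤ sin (k * θ) := fun k hk => by
    refine sin_nonneg_of_nonneg_of_le_pi (by positivity) ?_
    rw [hθ, ← mul_div_assoc, div_le_iff₀ (by linarith)]
    exact mul_le_mul_of_nonneg_right (by exact_mod_cast hk) pi_pos.le |>.trans_eq (mul_comm _ _)
  obtain ⟨n, rfl | rfl⟩ := Nat.even_or_odd' r
  · rw [(dihedralCoeff_eq_sin hsin.ne' hcos.ne' h n).1]
    have := hsin_nonneg (2 * n + 1) (by omega)
    have := hsin_nonneg (2 * n) (by omega)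
    push_cast at *
    constructor <;> positivity
  · rw [(dihedralCoeff_eq_sin hsin.ne' hcos.ne' h n).2]
    have := hsin_nonneg (2 * n + 1) (by omega)
    have := hsin_nonneg (2 * n + 2) (by omega)
    push_cast at *
    constructor <;> positivity

end DihedralCoeff

namespace CoxeterGeomRep

open CoxeterSystem

variable {B W V : Type*} [Group W] [AddCommGroup V] [Module ℝ V]
  {M : CoxeterMatrix B} {cs : CoxeterSystem M W} (g : CoxeterGeomRep M cs V)

local prefix:100 "s" => cs.simple
local prefix:100 "π" => cs.wordProd
local prefix:100 "ℓ" => cs.length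

noncomputable def coroot (i : B) : V →ₗ[ℝ] ℝ :=
  g.α.constr ℝ (g.a i)

@[simp]
lemma coroot_alpha (i l : B) : g.coroot i (g.α l) = g.a i l := by
  simp [coroot]

lemma rho_simple_apply (i : B) (v : V) : g.ρ (s i) v = v - g.coroot i v • g.α i := by
  have h : (g.ρ (s i) : V →ₗ[ℝ] V) = LinearMap.id - (g.coroot i).smulRight (g.α i) :=
    g.α.ext fun l => by simp [g.act]
  exact LinearMap.congr_fun h v

lemma rho_simple_alpha_self (i : B) : g.ρ (s i) (g.α i) = -g.α i := by
  rw [g.act, g.a_diag]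
  module

lemma rho_mul_apply (x y : W) (v : V) : g.ρ (x * y) v = g.ρ x (g.ρ y v) := by
  rw [map_mul, LinearEquiv.mul_apply]

@[simp]
lemma rho_one_apply (v : V) : g.ρ 1 v = v := by
  rw [map_one]
  rfl

@[simp]
lemma rho_rho_inv_apply (x : W) (v : V) : g.ρ x (g.ρ x⁻¹ v) = v := by
  rw [← rho_mul_apply, mul_inv_cancel, rho_one_apply]

def IsNonneg (v : V) : Prop := ∀ l, 0 ≤ g.α.repr v l

lemma isNonneg_alpha (i : B) : g.IsNonneg (g.α i) := by
  classical
  intro l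
  rw [g.α.repr_self, Finsupp.single_apply]
  split_ifs <;> norm_num

lemma eq_zero_of_isNonneg_of_isNonneg_neg {v : V} (h : g.IsNonneg v) (h' : g.IsNonneg (-v)) :
    v = 0 :=
  g.α.repr.injective <| Finsupp.ext fun l => by
    have := h' l
    simp only [map_neg, Finsupp.coe_neg, Pi.neg_apply, Left.nonneg_neg_iff] at this
    simpa using le_antisymm this (h l)

lemma isNonneg_beta {t : W} (ht : cs.IsReflection t) : g.IsNonneg (g.β t) := by
  obtain ⟨c, hc, hβ⟩ := g.β_pos t ht
  intro l
  rw [hβ, ← Finsupp.linearCombination_apply, ← g.α.coe_repr_symm]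
  simpa using hc l

lemma beta_eq_or_eq_neg {t : W} (ht : cs.IsReflection t) :
    ∃ (x : W) (k : B), t = x * s k * x⁻¹ ∧
      (g.β t = g.ρ x (g.α k) ∨ g.β t = -g.ρ x (g.α k)) := by
  obtain ⟨x, k, rfl⟩ := ht
  exact ⟨x, k, rfl, g.β_root x k⟩

lemma beta_ne_zero {t : W} (ht : cs.IsReflection t) : g.β t ≠ 0 := by
  obtain ⟨x, k, -, h | h⟩ := g.beta_eq_or_eq_neg ht <;>
    simpa [h] using g.α.ne_zero k

lemma not_isNonneg_neg_beta {t : W} (ht : cs.IsReflection t) : ¬ g.IsNonneg (-g.β t) :=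
  fun h => g.beta_ne_zero ht (g.eq_zero_of_isNonneg_of_isNonneg_neg (g.isNonneg_beta ht) h)

@[simp]
lemma beta_simple (i : B) : g.β (s i) = g.α i := by
  have h := g.β_root 1 i
  simp only [one_mul, inv_one, mul_one, rho_one_apply] at h
  refine h.resolve_right fun h => g.not_isNonneg_neg_beta (cs.isReflection_simple i) ?_
  simpa [h] using g.isNonneg_alpha i

lemma rho_beta_self {t : W} (ht : cs.IsReflection t) : g.ρ t (g.β t) = -g.β t := by
  obtain ⟨x, k, rfl, h | h⟩ := g.beta_eq_or_eq_neg ht <;>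
    simp [h, rho_simple_alpha_self]

lemma rho_beta_eq_or_eq_neg {t : W} (ht : cs.IsReflection t) (y : W) :
    g.ρ y (g.β t) = g.β (y * t * y⁻¹) ∨ g.ρ y (g.β t) = -g.β (y * t * y⁻¹) := by
  obtain ⟨x, k, rfl, h | h⟩ := g.beta_eq_or_eq_neg ht
  all_goals
    have e : y * (x * s k * x⁻¹) * y⁻¹ = (y * x) * s k * (y * x)⁻¹ := by group
    rw [e, h]
    rcases g.β_root (y * x) k with h' | h' <;> rw [h', rho_mul_apply] <;> simp

lemma rho_alternatingWord_alpha (i j : B) (r : ℕ) :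
    g.ρ (π (alternatingWord i j r)) (g.α i) =
      (dihedralCoeff (-g.a i j) (-g.a j i) r).1 • g.α i +
        (dihedralCoeff (-g.a i j) (-g.a j i) r).2 • g.α j := by
  induction r with
  | zero => simp [dihedralCoeff, alternatingWord]
  | succ m ih =>
    rw [alternatingWord_succ', cs.wordProd_cons, rho_mul_apply, ih]
    by_cases hm : Even m
    · rw [if_pos hm, dihedralCoeff_succ_of_even _ _ hm]
      simp only [map_add, map_smul, rho_simple_apply, coroot_alpha, g.a_diag]
      module
    · rw [if_neg hm, dihedralCoeff_succ_of_not_even _ _ hm]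
      simp only [map_add, map_smul, rho_simple_apply, coroot_alpha, g.a_diag]
      module

/-- The coset decomposition `w = v * w_I`, `I = {i, j}`, with `v` of minimal length in `v W_I`. -/
lemma exists_eq_mul_alternatingWord {w : W} (i : B) {j : B} (hj : cs.IsRightDescent w j) :
    ∃ (v : W) (r : ℕ), 1 ≤ r ∧ w = v * π (alternatingWord i j r) ∧ ℓ w = ℓ v + r ∧
      ¬ cs.IsRightDescent v i ∧ ¬ cs.IsRightDescent v j := by
  induction h : ℓ w using Nat.strong_induction_on generalizing w i j with
  | _ n ih =>
    have hlen : ℓ (w * s j) + 1 = ℓ w := cs.isRightDescent_iff.1 hj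
    have hw : w = w * s j * s j := by rw [cs.simple_mul_simple_cancel_right]
    by_cases hi : cs.IsRightDescent (w * s j) i
    · obtain ⟨v, r, hr, hv, hvlen, hvj, hvi⟩ := ih _ (by omega) j hi rfl
      refine ⟨v, r + 1, by omega, ?_, by omega, hvi, hvj⟩
      rw [alternatingWord_succ, cs.wordProd_concat, ← mul_assoc, ← hv, ← hw]
    · refine ⟨w * s j, 1, le_rfl, ?_, by omega, hi, ?_⟩
      · rw [show alternatingWord i j 1 = [j] from rfl, cs.wordProd_singleton, ← hw]
      · rw [← cs.isRightDescent_iff_not_isRightDescent_mul]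
        exact hj

lemma lt_coxeterMatrix_of_not_isRightDescent {w v : W} {i j : B} {r : ℕ}
    (hw : w = v * π (alternatingWord i j r)) (hlen : ℓ w = ℓ v + r)
    (hi : ¬ cs.IsRightDescent w i) : r < M i j ∨ M i j = 0 := by
  by_contra! h
  have hred : ¬ cs.IsReduced (alternatingWord j i (r + 1)) :=
    cs.not_isReduced_alternatingWord j i (by rw [M.symmetric]; exact h.2)
      (by rw [M.symmetric]; omega)
  have hword : ℓ (π (alternatingWord j i (r + 1))) ≤ r := by
    have := cs.length_wordProd_le (alternatingWord j i (r + 1))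
    rw [length_alternatingWord] at this
    have : ℓ (π (alternatingWord j i (r + 1))) ≠ r + 1 := fun e =>
      hred (by rw [CoxeterSystem.IsReduced, e, length_alternatingWord])
    omega
  have hwi : w * s i = v * π (alternatingWord j i (r + 1)) := by
    rw [alternatingWord_succ, cs.wordProd_concat, ← mul_assoc, ← hw]
  have := cs.length_mul_le v (π (alternatingWord j i (r + 1)))
  have := cs.not_isRightDescent_iff.1 hi
  rw [hwi] at this
  omega

lemma dihedralCoeff_nonneg {i j : B} (hij : i ≠ j) {r : ℕ} (hr : r < M i j ∨ M i j = 0) :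
    0 ≤ (dihedralCoeff (-g.a i j) (-g.a j i) r).1 ∧
      0 ≤ (dihedralCoeff (-g.a i j) (-g.a j i) r).2 := by
  have h₁ : 0 ≤ -g.a i j := neg_nonneg.2 (g.a_offdiag i j hij)
  have h₂ : 0 ≤ -g.a j i := neg_nonneg.2 (g.a_offdiag j i hij.symm)
  rcases hr with hr | hr
  · refine dihedralCoeff_nonneg_of_cos h₂ ?_ hr
    rw [neg_mul_neg, g.a_fin i j hij (by omega)]
  · exact dihedralCoeff_nonneg_of_four_le h₁ h₂ (by rw [neg_mul_neg]; exact g.a_inf i j hr) r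

theorem isNonneg_rho_alpha_of_not_isRightDescent {w : W} {i : B}
    (hi : ¬ cs.IsRightDescent w i) : g.IsNonneg (g.ρ w (g.α i)) := by
  induction h : ℓ w using Nat.strong_induction_on generalizing w i with
  | _ n ih =>
    rcases eq_or_ne w 1 with rfl | hw
    · simpa using g.isNonneg_alpha i
    obtain ⟨j, hj⟩ := cs.exists_rightDescent_of_ne_one hw
    have hij : i ≠ j := by rintro rfl; exact hi hj
    obtain ⟨v, r, hr, rfl, hlen, hvi, hvj⟩ := exists_eq_mul_alternatingWord i hj
    obtain ⟨hp, hq⟩ :=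
      g.dihedralCoeff_nonneg hij (lt_coxeterMatrix_of_not_isRightDescent rfl hlen hi)
    have hvi' := ih _ (by omega) hvi rfl
    have hvj' := ih _ (by omega) hvj rfl
    intro l
    rw [rho_mul_apply, rho_alternatingWord_alpha]
    simp only [map_add, map_smul, Finsupp.coe_add, Finsupp.coe_smul, Pi.add_apply,
      Pi.smul_apply, smul_eq_mul]
    exact add_nonneg (mul_nonneg hp (hvi' l)) (mul_nonneg hq (hvj' l))

lemma isNonneg_neg_rho_alpha_of_isRightDescent {w : W} {i : B} (hi : cs.IsRightDescent w i) :
    g.IsNonneg (-g.ρ w (g.α i)) := by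
  have := g.isNonneg_rho_alpha_of_not_isRightDescent
    (cs.isRightDescent_iff_not_isRightDescent_mul.1 hi)
  rwa [rho_mul_apply, rho_simple_alpha_self, map_neg] at this

lemma rho_injective : Function.Injective g.ρ := by
  refine (injective_iff_map_eq_one g.ρ).2 fun w hw => ?_
  by_contra hw1
  obtain ⟨j, hj⟩ := cs.exists_rightDescent_of_ne_one hw1
  have := g.isNonneg_neg_rho_alpha_of_isRightDescent hj j
  norm_num [hw] at this

noncomputable def form : V →ₗ[ℝ] V →ₗ[ℝ] ℝ :=
  g.α.constr ℝ fun k => g.δ k • g.coroot k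

lemma form_alpha_left (k : B) (v : V) : g.form (g.α k) v = g.δ k * g.coroot k v := by
  simp [form]

lemma form_comm (v w : V) : g.form v w = g.form w v := by
  have h : g.form = g.form.flip :=
    LinearMap.ext_basis g.α g.α fun k l => by
      simp only [LinearMap.flip_apply, form_alpha_left, coroot_alpha, g.symmetrize]
  exact LinearMap.congr_fun₂ h v w

lemma form_alpha_right (k : B) (v : V) : g.form v (g.α k) = g.δ k * g.coroot k v := by
  rw [form_comm, form_alpha_left]

lemma form_rho_simple (i : B) (v w : V) :
    g.form (g.ρ (s i) v) (g.ρ (s i) w) = g.form v w := by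
  simp only [rho_simple_apply, map_sub, map_smul, LinearMap.sub_apply, LinearMap.smul_apply,
    smul_eq_mul, form_alpha_left, form_alpha_right, coroot_alpha, g.a_diag]
  ring

lemma form_rho (x : W) (v w : V) : g.form (g.ρ x v) (g.ρ x w) = g.form v w := by
  induction x using cs.simple_induction_left generalizing v w with
  | one => simp
  | mul_simple_left x i ih => rw [rho_mul_apply, rho_mul_apply, form_rho_simple, ih]

lemma form_beta_self_pos {t : W} (ht : cs.IsReflection t) : 0 < g.form (g.β t) (g.β t) := by
  obtain ⟨x, k, -, h | h⟩ := g.beta_eq_or_eq_neg ht <;>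
    simpa [h, form_rho, form_alpha_left, g.a_diag] using g.δ_pos k

lemma rho_reflection_apply {t : W} (ht : cs.IsReflection t) (v : V) :
    g.ρ t v = v - (2 * g.form (g.β t) v / g.form (g.β t) (g.β t)) • g.β t := by
  obtain ⟨x, k, rfl, hβ⟩ := g.beta_eq_or_eq_neg ht
  have hδ := (g.δ_pos k).ne'
  have hv : g.form (g.ρ x (g.α k)) v = g.δ k * g.coroot k (g.ρ x⁻¹ v) := by
    have := g.form_rho x (g.α k) (g.ρ x⁻¹ v)
    rwa [rho_rho_inv_apply, form_alpha_left] at this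
  have hself : g.form (g.ρ x (g.α k)) (g.ρ x (g.α k)) = 2 * g.δ k := by
    rw [form_rho, form_alpha_left, coroot_alpha, g.a_diag, mul_comm]
  have hcoeff : 2 * g.form (g.ρ x (g.α k)) v / g.form (g.ρ x (g.α k)) (g.ρ x (g.α k)) =
      g.coroot k (g.ρ x⁻¹ v) := by
    rw [hv, hself]
    field_simp
  rw [rho_mul_apply, rho_mul_apply, rho_simple_apply, map_sub, map_smul, rho_rho_inv_apply]
  rcases hβ with h | h
  · rw [h, hcoeff]
  · simp only [h, map_neg, LinearMap.neg_apply, neg_neg, mul_neg, neg_div, neg_smul, smul_neg,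
      hcoeff]

lemma eq_of_beta_eq_smul {t t' : W} (ht : cs.IsReflection t) (ht' : cs.IsReflection t')
    {c : ℝ} (hc : g.β t' = c • g.β t) : t' = t := by
  have hc0 : c ≠ 0 := by
    rintro rfl
    exact g.beta_ne_zero ht' (by simpa using hc)
  have hpos := (g.form_beta_self_pos ht).ne'
  refine g.rho_injective (LinearEquiv.ext fun v => ?_)
  rw [g.rho_reflection_apply ht, g.rho_reflection_apply ht', hc]
  simp only [map_smul, LinearMap.smul_apply, smul_eq_mul, smul_smul]
  congr 2
  field_simp

lemma eq_simple_of_repr_beta_eq_zero {t : W} (ht : cs.IsReflection t) {i : B}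
    (h : ∀ l, l ≠ i → g.α.repr (g.β t) l = 0) : t = s i := by
  refine g.eq_of_beta_eq_smul (cs.isReflection_simple i) ht (c := g.α.repr (g.β t) i) ?_
  rw [beta_simple]
  refine g.α.repr.injective (Finsupp.ext fun l => ?_)
  rcases eq_or_ne l i with rfl | hl
  · simp
  · simp [h l hl, hl.symm]

lemma beta_simple_mul_mul_simple {t : W} (ht : cs.IsReflection t) {i : B} (hti : t ≠ s i) :
    g.β (s i * t * s i) = g.ρ (s i) (g.β t) := by
  obtain ⟨l, hl, hpos⟩ : ∃ l, l ≠ i ∧ 0 < g.α.repr (g.β t) l := by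
    by_contra! h
    exact hti (g.eq_simple_of_repr_beta_eq_zero ht fun l hl =>
      le_antisymm (h l hl) (g.isNonneg_beta ht l))
  have hcoord : g.α.repr (g.ρ (s i) (g.β t)) l = g.α.repr (g.β t) l := by
    simp [rho_simple_apply, hl.symm]
  have hconj := g.rho_beta_eq_or_eq_neg ht (s i)
  rw [cs.inv_simple] at hconj
  refine (hconj.resolve_right fun h => ?_).symm
  have := g.isNonneg_beta (ht.conj (s i)) l
  rw [cs.inv_simple, show g.β (s i * t * s i) = -g.ρ (s i) (g.β t) by rw [h, neg_neg]] at this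
  simp only [map_neg, Finsupp.coe_neg, Pi.neg_apply, hcoord] at this
  linarith

lemma isNonneg_rho_beta_of_length_lt {w t : W} (ht : cs.IsReflection t) (h : ℓ w < ℓ (w * t)) :
    g.IsNonneg (g.ρ w (g.β t)) := by
  induction hn : ℓ w using Nat.strong_induction_on generalizing w with
  | _ n ih =>
    rcases eq_or_ne w 1 with rfl | hw
    · simpa using g.isNonneg_beta ht
    obtain ⟨i, hi⟩ := cs.exists_leftDescent_of_ne_one hw
    set w' := s i * w
    have hlen : ℓ w' + 1 = ℓ w := cs.isLeftDescent_iff.1 hi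
    have hw' : w = s i * w' := (cs.simple_mul_simple_cancel_left i).symm
    have hlt : ℓ w' < ℓ (w' * t) := by
      have := cs.length_simple_mul (w' * t) i
      rw [← mul_assoc, ← hw'] at this
      omega
    have hu : cs.IsReflection (w' * t * w'⁻¹) := ht.conj w'
    have hpos : g.ρ w' (g.β t) = g.β (w' * t * w'⁻¹) :=
      (g.rho_beta_eq_or_eq_neg ht w').resolve_right fun e =>
        g.not_isNonneg_neg_beta hu (e ▸ ih _ (by omega) hlt rfl)
    have hus : w' * t * w'⁻¹ ≠ s i := by
      intro e
      have : w * t = w' := by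
        rw [hw', mul_assoc, show w' * t = s i * w' by rw [← e]; group,
          cs.simple_mul_simple_cancel_left]
      rw [this] at h
      omega
    rw [hw', rho_mul_apply, hpos, ← g.beta_simple_mul_mul_simple hu hus]
    have hsu := hu.conj (s i)
    rw [cs.inv_simple] at hsu
    exact g.isNonneg_beta hsu

theorem isRightInversion_iff {w t : W} (ht : cs.IsReflection t) :
    cs.IsRightInversion w t ↔ g.IsNonneg (-g.ρ w (g.β t)) := by
  refine ⟨fun h => ?_, fun h => ⟨ht, ?_⟩⟩
  · have := g.isNonneg_rho_beta_of_length_lt ht (w := w * t)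
      (by rw [mul_assoc, ht.mul_self, mul_one]; exact h.2)
    rwa [rho_mul_apply, g.rho_beta_self ht, map_neg] at this
  · refine (lt_or_gt_of_ne (ht.length_mul_left_ne w)).resolve_right fun hlt => ?_
    have h0 := g.eq_zero_of_isNonneg_of_isNonneg_neg (g.isNonneg_rho_beta_of_length_lt ht hlt) h
    exact g.beta_ne_zero ht (by simpa using congrArg (g.ρ w⁻¹) h0)

theorem isLeftInversion_iff {w t : W} (ht : cs.IsReflection t) :
    cs.IsLeftInversion w t ↔ g.IsNonneg (-g.ρ w⁻¹ (g.β t)) :=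
  cs.isRightInversion_inv_iff.symm.trans (g.isRightInversion_iff ht)

include g in
lemma isLeftInversion_simple_mul {w t : W} (h : cs.IsLeftInversion w t) {i : B} (hti : t ≠ s i) :
    cs.IsLeftInversion (s i * w) (s i * t * s i) := by
  have hconj := h.1.conj (s i)
  rw [cs.inv_simple] at hconj
  rw [g.isLeftInversion_iff hconj, g.beta_simple_mul_mul_simple h.1 hti, mul_inv_rev,
    cs.inv_simple, rho_mul_apply, ← rho_mul_apply g (s i), cs.simple_mul_simple_self,
    rho_one_apply]
  exact (g.isLeftInversion_iff h.1).1 h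

include g in
theorem finite_setOf_isLeftInversion (w : W) : {t | cs.IsLeftInversion w t}.Finite := by
  induction hn : ℓ w using Nat.strong_induction_on generalizing w with
  | _ n ih =>
    rcases eq_or_ne w 1 with rfl | hw
    · refine Set.finite_empty.subset fun t ht => ?_
      simpa using ht.2
    obtain ⟨i, hi⟩ := cs.exists_leftDescent_of_ne_one hw
    have hlen : ℓ (s i * w) + 1 = ℓ w := cs.isLeftDescent_iff.1 hi
    refine ((ih _ (by omega) (s i * w) rfl).image (fun t => s i * t * s i)).insert (s i)
      |>.subset fun t ht => ?_
    rcases eq_or_ne t (s i) with rfl | hti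
    · exact Set.mem_insert _ _
    · refine Or.inr ⟨s i * t * s i, isLeftInversion_simple_mul g ht hti, ?_⟩
      simp [mul_assoc]

lemma neg_rho_inv_beta_of_isLeftInversion {w t : W} (h : cs.IsLeftInversion w t) :
    -g.ρ w⁻¹ (g.β t) = g.β (w⁻¹ * t * w) := by
  have hconj := h.1.conj w⁻¹
  rw [inv_inv] at hconj
  rcases g.rho_beta_eq_or_eq_neg h.1 w⁻¹ with e | e <;> rw [inv_inv] at e
  · exact absurd ((g.isLeftInversion_iff h.1).1 h) (e ▸ g.not_isNonneg_neg_beta hconj)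
  · rw [e, neg_neg]

lemma simple_mem_of_alpha_inCone {Y : Set W} (hY : ∀ y ∈ Y, cs.IsReflection y) {i : B}
    (h : InCone (g.β '' Y) (g.α i)) : s i ∈ Y := by
  classical
  obtain ⟨n, x, c, hx, hc, hsum⟩ := h
  choose y hyY hyx using hx
  obtain ⟨k, hk⟩ : ∃ k, c k ≠ 0 := by
    by_contra! h0
    exact g.α.ne_zero i (by simp [hsum, h0])
  have hcoord : ∀ l, l ≠ i → g.α.repr (g.β (y k)) l = 0 := by
    intro l hl
    have hterm : ∀ k', 0 ≤ c k' * g.α.repr (g.β (y k')) l := fun k' =>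
      mul_nonneg (hc k') (g.isNonneg_beta (hY _ (hyY k')) l)
    have hsum_l : ∑ k', c k' * g.α.repr (g.β (y k')) l = 0 := by
      have := congrArg (fun v => g.α.repr v l) hsum
      simp only [g.α.repr_self, map_sum, map_smul, Finsupp.coe_finsetSum, Finsupp.coe_smul,
        Finset.sum_apply, Pi.smul_apply, smul_eq_mul, ← hyx] at this
      rw [← this, Finsupp.single_apply, if_neg hl.symm]
    have := (Finset.sum_eq_zero_iff_of_nonneg fun k' _ => hterm k').1 hsum_l k (Finset.mem_univ k)
    exact (mul_eq_zero.1 this).resolve_left hk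
  rw [← g.eq_simple_of_repr_beta_eq_zero (hY _ (hyY k)) hcoord]
  exact hyY k

/-- `w⁻¹` sends the roots of the inversions of `w` to negative roots, and the root of the cover
reflection `w s w⁻¹` to `-α_s`. -/
theorem not_inCone_beta_of_isCoverReflection {w t : W} (hcov : IsCoverReflection cs w t)
    {X : Set W} (hX : ∀ t' ∈ X, cs.IsLeftInversion w t') (htX : t ∉ X) :
    ¬ InCone (g.β '' X) (g.β t) := by
  obtain ⟨ht, σ, htw⟩ := hcov
  have hσ : w⁻¹ * t * w = s σ := by rw [mul_assoc, htw, ← mul_assoc, inv_mul_cancel, one_mul]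
  intro hcone
  have himage := hcone.map (-(g.ρ w⁻¹).toLinearMap)
  simp only [LinearMap.neg_apply, LinearEquiv.coe_coe, g.neg_rho_inv_beta_of_isLeftInversion ht,
    hσ, beta_simple] at himage
  have hmem := g.simple_mem_of_alpha_inCone (Y := (fun t' => w⁻¹ * t' * w) '' X)
    (by rintro _ ⟨t', ht', rfl⟩; simpa using (hX t' ht').1.conj w⁻¹)
    (himage.mono ?_)
  · obtain ⟨t', ht', e⟩ := hmem
    rw [← hσ, mul_left_inj, mul_right_inj] at e
    exact htX (e ▸ ht')
  · rintro _ ⟨_, ⟨t', ht', rfl⟩, rfl⟩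
    exact ⟨_, ⟨t', ht', rfl⟩, (g.neg_rho_inv_beta_of_isLeftInversion (hX t' ht')).symm⟩

lemma rho_sub_mem_span_pair {i j : B} {d : W} (hd : d ∈ Subgroup.closure {s i, s j}) (v : V) :
    g.ρ d v - v ∈ Submodule.span ℝ {g.α i, g.α j} := by
  induction hd using Subgroup.closure_induction generalizing v with
  | mem x hx =>
    rcases hx with rfl | rfl <;> rw [rho_simple_apply, sub_sub_cancel_left, ← neg_smul] <;>
      exact Submodule.smul_mem _ _ (Submodule.subset_span (by simp))
  | one => simp
  | mul x y _ _ hx hy =>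
    rw [rho_mul_apply, ← sub_add_sub_cancel]
    exact Submodule.add_mem _ (hx _) (hy v)
  | inv x _ hx =>
    have := Submodule.neg_mem _ (hx (g.ρ x⁻¹ v))
    rwa [rho_rho_inv_apply, neg_sub] at this

lemma beta_mem_span_pair {u t : W} {i j : B} (ht : cs.IsReflection t)
    (htW : t ∈ (Subgroup.closure {s i, s j}).map (MulAut.conj u).toMonoidHom) :
    g.β t ∈ Submodule.span ℝ {g.ρ u (g.α i), g.ρ u (g.α j)} := by
  obtain ⟨d, hd, rfl⟩ := htW
  simp only [MulEquiv.coe_toMonoidHom, MulAut.conj_apply] at ht ⊢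
  set β := g.β (u * d * u⁻¹)
  have hmem := Submodule.mem_map_of_mem (f := (g.ρ u).toLinearMap)
    (g.rho_sub_mem_span_pair hd (g.ρ u⁻¹ β))
  rw [Submodule.map_span, Set.image_pair] at hmem
  have e : β = (-(1 / 2) : ℝ) • (g.ρ u (g.ρ d (g.ρ u⁻¹ β) - g.ρ u⁻¹ β)) := by
    have := g.rho_beta_self ht
    rw [rho_mul_apply, rho_mul_apply] at this
    rw [map_sub, this, rho_rho_inv_apply]
    module
  rw [e]
  exact Submodule.smul_mem _ _ hmem

noncomputable def height : V →ₗ[ℝ] ℝ :=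
  g.α.constr ℝ fun _ => 1

lemma height_beta_pos {t : W} (ht : cs.IsReflection t) : 0 < g.height (g.β t) := by
  have hne : (g.α.repr (g.β t)).support.Nonempty := by
    simpa [Finsupp.support_nonempty_iff] using g.beta_ne_zero ht
  obtain ⟨l, hl⟩ := hne
  rw [height, Module.Basis.constr_apply, Finsupp.sum]
  simp only [smul_eq_mul, mul_one]
  exact Finset.sum_pos' (fun l _ => g.isNonneg_beta ht l)
    ⟨l, hl, (g.isNonneg_beta ht l).lt_of_ne (Finsupp.mem_support_iff.1 hl).symm⟩

lemma eq_zero_of_height_eq_zero_of_coord_eq_zero {u : W} {i j : B} (hij : i ≠ j) :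
    ∀ z ∈ Submodule.span ℝ {g.ρ u (g.α i), g.ρ u (g.α j)}, g.height z = 0 →
      (g.α.coord j ∘ₗ (g.ρ u⁻¹).toLinearMap) z = 0 → z = 0 := by
  intro z hz hF hQ
  obtain ⟨p, q, rfl⟩ := Submodule.mem_span_pair.1 hz
  obtain rfl : q = 0 := by simpa [Finsupp.single_apply, hij] using hQ
  have hi : g.height (g.ρ u (g.α i)) ≠ 0 := by
    have hpos := g.height_beta_pos ((cs.isReflection_simple i).conj u)
    rcases g.β_root u i with h | h <;> rw [h] at hpos
    · exact hpos.ne'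
    · simpa using hpos.ne'
  simp only [map_smul, zero_smul, add_zero, smul_eq_mul, mul_eq_zero, hi, or_false] at hF
  simp [hF]

end CoxeterGeomRep

/-- Let `W'` be a rank two parabolic subgroup (a conjugate of a standard
parabolic subgroup generated by two simple reflections) all of whose reflections are
inversions of `w`.  If `t ∈ W'` is a cover reflection of `w`, then `t` is a canonical
generator of `W'`. -/
theorem cover_reflection_is_canonical_generator
    {B W V : Type*} [Group W] [AddCommGroup V] [Module ℝ V]
    {M : CoxeterMatrix B} (cs : CoxeterSystem M W) (g : CoxeterGeomRep M cs V)
    (W' : Subgroup W) (w t : W)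
    (hW' : ∃ (u : W) (i j : B), i ≠ j ∧
      W' = (Subgroup.closure {cs.simple i, cs.simple j}).map (MulAut.conj u).toMonoidHom)
    (hinv : ∀ t' ∈ W', cs.IsReflection t' → cs.IsLeftInversion w t')
    (htW' : t ∈ W') (hcov : IsCoverReflection cs w t) :
    ∃ R : Set W, IsCanonicalGenerators cs g W' R ∧ t ∈ R := by
  obtain ⟨u, i, j, hij, hW'⟩ := hW'
  set S := {t' | t' ∈ W' ∧ cs.IsReflection t'}
  have hS : S.Finite :=
    (g.finite_setOf_isLeftInversion w).subset fun t' ht' => hinv t' ht'.1 ht'.2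
  refine ⟨{r | r ∈ S ∧ ¬ InCone (g.β '' (S \ {r})) (g.β r)},
    ⟨fun r hr => hr.1, fun t' ht' ht'r => ?_, fun r hr => hr.2⟩, ⟨htW', hcov.1.1⟩, ?_⟩
  · exact inCone_image_extreme (g.eq_zero_of_height_eq_zero_of_coord_eq_zero hij) hS
      (fun r hr => g.beta_mem_span_pair hr.2 (hW' ▸ hr.1)) (fun r hr => g.height_beta_pos hr.2)
      (fun a ha b hb _ h => g.eq_of_beta_eq_smul ha.2 hb.2 h) ⟨ht', ht'r⟩
  · exact g.not_inCone_beta_of_isCoverReflection hcov (fun t' ht' => hinv t' ht'.1.1 ht'.1.2)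
      fun h => h.2 rfl
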